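/- arXiv:1808.10818 — 3 statements merged into one kernel-verified Lean document; each statement's English description precedes it below -/
import Mathlib

section
/- Let N ≥ 1 and d, n be positive integers. If there exist polynomials P, Q ∈ ℤ[X] such that d·Xⁿ = P(X)·X^{n+1} + Q(X)·((X+1)^N − 1) in ℤ[X], then N divides d. -/
/-!
Write `(X + 1)^N - 1 = X * S` with `S = ∑_{i<N} (X + 1)^i`, so `S(0) = N ≠ 0` and `X ∤ S`.
Then `X^n` divides `Q * X * S = d Xⁿ - P X^{n+1}`, and since `X` is prime, `Q * X = Xⁿ * T`.
Cancelling `Xⁿ` leaves `d = P X + T S`, and evaluating at `0` gives `d = T(0) * N`.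
-/

namespace Polynomial

variable {R : Type*}

theorem X_add_one_pow_sub_one_eq_X_mul_geom_sum [CommRing R] (N : ℕ) :
    (X + 1 : R[X]) ^ N - 1 = X * ∑ i ∈ Finset.range N, (X + 1) ^ i := by
  rw [← mul_geom_sum, add_sub_cancel_right]

theorem eval_zero_geom_sum_X_add_one [CommRing R] (N : ℕ) :
    (∑ i ∈ Finset.range N, (X + 1 : R[X]) ^ i).eval 0 = N := by
  simp [eval_finsetSum]

theorem eval_zero_dvd_of_C_mul_X_pow_eq [CommRing R] [IsDomain R] {d : R} {n : ℕ}
    {P Q S : R[X]} (hS : S.eval 0 ≠ 0) (h : C d * X ^ n = P * X ^ (n + 1) + Q * (X * S)) :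
    S.eval 0 ∣ d := by
  have hXS : ¬ X ∣ S := by rwa [X_dvd_iff, coeff_zero_eq_eval_zero]
  have hdvd : X ^ n ∣ Q * X * S := ⟨C d - P * X, by linear_combination -h⟩
  obtain ⟨T, hT⟩ := prime_X.pow_dvd_of_dvd_mul_right n hXS hdvd
  have hc : C d = P * X + T * S := by
    apply mul_left_cancel₀ (pow_ne_zero n (X_ne_zero (R := R)))
    linear_combination h + S * hT
  exact ⟨T.eval 0, by simpa [mul_comm] using congrArg (eval 0) hc⟩

end Polynomial

open Polynomial in
theorem stmt4_general (N d n : ℕ) (hN : 1 ≤ N)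
    (P Q : Polynomial ℤ)
    (h : C (d : ℤ) * X ^ n = P * X ^ (n + 1) + Q * ((X + 1) ^ N - 1)) :
    N ∣ d := by
  rw [X_add_one_pow_sub_one_eq_X_mul_geom_sum] at h
  have hS : (∑ i ∈ Finset.range N, (X + 1 : ℤ[X]) ^ i).eval 0 ≠ 0 := by
    rw [eval_zero_geom_sum_X_add_one]
    omega
  have hdvd := eval_zero_dvd_of_C_mul_X_pow_eq hS h
  rw [eval_zero_geom_sum_X_add_one] at hdvd
  exact_mod_cast hdvd

open Polynomial in
/-- If `d·Xⁿ = P(X)·X^{n+1} + Q(X)·((X+1)^N − 1)` in `ℤ[X]`, then `N ∣ d`. -/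
theorem stmt4 (N d n : ℕ) (hN : 1 ≤ N) (hd : 0 < d) (hn : 0 < n)
    (P Q : Polynomial ℤ)
    (h : C (d : ℤ) * X ^ n = P * X ^ (n + 1) + Q * ((X + 1) ^ N - 1)) :
    N ∣ d :=
  stmt4_general N d n hN P Q h
end

section
/- Let p be a prime. In the ring ℤ[X, Y]/((X+1)^p − 1, (Y+1)^p − 1), the element X^p·Y − X·Y^p lies in the ideal generated by all monomials X^a·Y^b with a + b ≥ p + 2. -/
/-!
Let `𝔪 = (x, y)`. Since `p` is prime, `(u + 1) ^ p = 1` forces `p u = -u ^ p - p u² h` for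
some `h`, so `p 𝔪 ⊆ 𝔪 ^ p + p 𝔪²`; feeding this back into itself gives
`p 𝔪 ^ (k + 1) ⊆ 𝔪 ^ (p + k)`. The same two relations give
`x ^ p y - x y ^ p = p x y (y h_y - x h_x) ∈ p 𝔪³ ⊆ 𝔪 ^ (p + 2)`.
-/

open Finset in
theorem exists_add_one_pow_prime_eq {R : Type*} [CommSemiring R] {p : ℕ} (hp : p.Prime) (u : R) :
    ∃ h : R, (u + 1) ^ p = u ^ p + 1 + p * u + p * u ^ 2 * h := by
  refine ⟨∑ k ∈ Ico 2 p, u ^ (k - 2) * (p.choose k / p : ℕ), ?_⟩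
  rw [add_pow_prime_eq' hp, one_pow, ← Ico_add_one_left_eq_Ioo, zero_add,
    sum_eq_sum_Ico_succ_bot hp.one_lt, Nat.choose_one_right, Nat.div_self hp.pos, mul_add,
    mul_sum, mul_sum]
  simp only [one_pow, mul_one, pow_one, Nat.cast_one, add_assoc]
  congr 3
  refine sum_congr rfl fun k hk => ?_
  rw [← Nat.add_sub_cancel' (mem_Ico.mp hk).1, pow_add, Nat.add_sub_cancel_left]
  ring

namespace Ideal

section CommSemiring

variable {R : Type*} [CommSemiring R]

theorem mul_pow_succ_le_pow_add_of_mul_le {I J : Ideal R} {n : ℕ}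
    (h : J * I ≤ I ^ n ⊔ J * I ^ 2) (k : ℕ) : J * I ^ (k + 1) ≤ I ^ (n + k) := by
  have step (j : ℕ) : J * I ^ (j + 1) ≤ I ^ (n + j) ⊔ J * I ^ (j + 1 + 1) :=
    calc J * I ^ (j + 1) = J * I * I ^ j := by rw [pow_succ', mul_assoc]
      _ ≤ (I ^ n ⊔ J * I ^ 2) * I ^ j := mul_mono_left h
      _ = I ^ (n + j) ⊔ J * I ^ (j + 1 + 1) := by
        rw [sup_mul, mul_assoc, ← pow_add, ← pow_add, add_comm 2]
  have absorb (d : ℕ) : J * I ^ (k + 1) ≤ I ^ (n + k) ⊔ J * I ^ (k + d + 1) := by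
    induction d with
    | zero => exact le_sup_right
    | succ d ih =>
      exact ih.trans (sup_le le_sup_left ((step (k + d)).trans
        (sup_le_sup_right (Ideal.pow_le_pow_right (by omega)) _)))
  exact (absorb n).trans
    (sup_le le_rfl (mul_le_right.trans (Ideal.pow_le_pow_right (by omega))))

theorem span_pair_pow_le_span_monomials (x y : R) (n : ℕ) :
    span {x, y} ^ n ≤ span {z | ∃ a b : ℕ, n ≤ a + b ∧ z = x ^ a * y ^ b} := by
  induction n with
  | zero =>
    rw [pow_zero, one_eq_top, top_le_iff, eq_top_iff_one]
    exact subset_span ⟨0, 0, le_rfl, by simp⟩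
  | succ n ih =>
    rw [pow_succ']
    refine (mul_mono_right ih).trans ?_
    rw [span_mul_span', span_le]
    rintro _ ⟨u, hu, _, ⟨a, b, hab, rfl⟩, rfl⟩
    rcases hu with rfl | rfl
    · exact subset_span ⟨a + 1, b, by omega, by ring⟩
    · exact subset_span ⟨a, b + 1, by omega, by ring⟩

end CommSemiring

variable {R : Type*} [CommRing R] {p : ℕ}

theorem natCast_mul_mem_pow_sup (hp : p.Prime) {I : Ideal R} {u : R} (hu : u ∈ I)
    (hu₁ : (u + 1) ^ p = 1) : (p : R) * u ∈ I ^ p ⊔ span {(p : R)} * I ^ 2 := by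
  obtain ⟨h, hh⟩ := exists_add_one_pow_prime_eq hp u
  rw [show (p : R) * u = -u ^ p - p * (u ^ 2 * h) by linear_combination hh.symm.trans hu₁]
  exact sub_mem (neg_mem (mem_sup_left (pow_mem_pow hu p)))
    (mem_sup_right (mul_mem_mul (mem_span_singleton_self _) (mul_mem_right _ _ (pow_mem_pow hu 2))))

theorem span_natCast_mul_span_pair_le (hp : p.Prime) {x y : R} (hx : (x + 1) ^ p = 1)
    (hy : (y + 1) ^ p = 1) :
    span {(p : R)} * span {x, y} ≤ span {x, y} ^ p ⊔ span {(p : R)} * span {x, y} ^ 2 := by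
  refine span_singleton_mul_le_iff.mpr fun z hz => ?_
  obtain ⟨a, b, rfl⟩ := mem_span_pair.mp hz
  rw [show (p : R) * (a * x + b * y) = a * (p * x) + b * (p * y) by ring]
  exact add_mem (mul_mem_left _ _ (natCast_mul_mem_pow_sup hp (subset_span (by simp)) hx))
    (mul_mem_left _ _ (natCast_mul_mem_pow_sup hp (subset_span (by simp)) hy))

theorem pow_mul_sub_mul_pow_mem_span_pair_pow (hp : p.Prime) {x y : R} (hx : (x + 1) ^ p = 1)
    (hy : (y + 1) ^ p = 1) : x ^ p * y - x * y ^ p ∈ span {x, y} ^ (p + 2) := by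
  obtain ⟨g, hg⟩ := exists_add_one_pow_prime_eq hp x
  obtain ⟨h, hh⟩ := exists_add_one_pow_prime_eq hp y
  have hxI : x ∈ span {x, y} := subset_span (by simp)
  have hyI : y ∈ span {x, y} := subset_span (by simp)
  rw [show x ^ p * y - x * y ^ p = p * (x * (y * (y * h - x * g))) by
    linear_combination y * (hg.symm.trans hx) - x * (hh.symm.trans hy)]
  refine mul_pow_succ_le_pow_add_of_mul_le (span_natCast_mul_span_pair_le hp hx hy) 2
    (mul_mem_mul (mem_span_singleton_self _) ?_)
  rw [pow_three]
  exact mul_mem_mul hxI (mul_mem_mul hyI (sub_mem (mul_mem_right _ _ hyI) (mul_mem_right _ _ hxI)))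

end Ideal

open MvPolynomial in
/-- In `ℤ[X,Y]/((X+1)^p − 1, (Y+1)^p − 1)`, the element `X^p·Y − X·Y^p` lies in the
ideal generated by the monomials `X^a·Y^b` with `a + b ≥ p + 2`. -/
theorem stmt6 (p : ℕ) (hp : p.Prime) :
    Ideal.Quotient.mk
        (Ideal.span {((X 0 + 1) ^ p - 1 : MvPolynomial (Fin 2) ℤ), (X 1 + 1) ^ p - 1})
        (X 0 ^ p * X 1 - X 0 * X 1 ^ p) ∈
      Ideal.span {z : MvPolynomial (Fin 2) ℤ ⧸
          Ideal.span {((X 0 + 1) ^ p - 1 : MvPolynomial (Fin 2) ℤ), (X 1 + 1) ^ p - 1} |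
        ∃ a b : ℕ, p + 2 ≤ a + b ∧ z =
          Ideal.Quotient.mk
            (Ideal.span {((X 0 + 1) ^ p - 1 : MvPolynomial (Fin 2) ℤ), (X 1 + 1) ^ p - 1})
            (X 0 ^ a * X 1 ^ b)} := by
  have relation (i : Fin 2) :
      (Ideal.Quotient.mk (Ideal.span {((X 0 + 1) ^ p - 1 : MvPolynomial (Fin 2) ℤ),
        (X 1 + 1) ^ p - 1}) (X i) + 1) ^ p = 1 := by
    rw [← map_one (Ideal.Quotient.mk _), ← map_add, ← map_pow, Ideal.Quotient.eq]
    exact Ideal.subset_span (by fin_cases i <;> simp)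
  simp only [map_sub, map_mul, map_pow]
  exact Ideal.span_pair_pow_le_span_monomials _ _ _
    (Ideal.pow_mul_sub_mul_pow_mem_span_pair_pow hp (relation 0) (relation 1))
end

section
/- Let p be a prime and k, l ≥ 1. The monomial functions (𝔽_p)^k → 𝔽_p of the form (t₁, …, t_k) ↦ t₁^{s₁} ⋯ t_k^{s_k}, where s ranges over tuples of nonnegative integers with s₁ + ⋯ + s_k = l and such that all coordinates of s except possibly the first nonzero one are at most p − 1, are linearly independent over 𝔽_p. -/
/-!
Over `𝔽_p` we have `t ^ n = t ^ n'` for all `t` whenever `n` and `n'` are both zero, or both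
positive and congruent modulo `p - 1`. Reducing every exponent to its representative in
`{0, …, p - 1}` therefore does not change a monomial function, and monomials with all exponents
below `p` are linearly independent, since a polynomial of degree `< p` in each variable that
vanishes on `𝔽_p^k` is zero. It remains to see that the reduction is injective on the admissible
exponent tuples: it preserves which coordinates vanish, and it fixes every coordinate except the
first nonzero one, which is then recovered from the sum `l`.
-/

open Finset

section Monomials

open MvPolynomial

universe u

variable (K σ : Type u) [Field K] [Fintype K] [Fintype σ]

theorem linearIndependent_monomial_functions :
    LinearIndependent K (fun d : {d : σ → ℕ // ∀ i, d i < Fintype.card K} =>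
      fun t : σ → K => ∏ i, t i ^ d.1 i) := by
  classical
  let toFinsupp : {d : σ → ℕ // ∀ i, d i < Fintype.card K} → σ →₀ ℕ :=
    fun d => Finsupp.equivFunOnFinite.symm d.1
  have hinj : Function.Injective toFinsupp := fun d d' h =>
    Subtype.ext (Finsupp.equivFunOnFinite.symm.injective h)
  have hmono : LinearIndependent K (fun d => monomial (toFinsupp d) (1 : K)) :=
    (basisMonomials σ K).linearIndependent.comp toFinsupp hinj
  have hspan : Submodule.span K (Set.range fun d => monomial (toFinsupp d) (1 : K))
      ≤ restrictDegree σ K (Fintype.card K - 1) := by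
    rw [Submodule.span_le]
    rintro _ ⟨d, rfl⟩
    rw [SetLike.mem_coe, mem_restrictDegree]
    intro e he i
    rw [Finset.mem_singleton.mp (support_monomial_subset he)]
    exact Nat.le_sub_one_of_lt (d.2 i)
  have hdisj : Disjoint (Submodule.span K (Set.range fun d =>
      monomial (toFinsupp d) (1 : K))) (LinearMap.ker (evalₗ K σ)) := by
    rw [Submodule.disjoint_def]
    intro P hP hker
    exact eq_zero_of_eval_eq_zero σ K P (fun v => congrFun hker v) (hspan hP)
  have hfun : (fun d : {d : σ → ℕ // ∀ i, d i < Fintype.card K} => fun t : σ → K =>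
      ∏ i, t i ^ d.1 i) = evalₗ K σ ∘ fun d => monomial (toFinsupp d) 1 := by
    funext d t
    simp [evalₗ, eval_monomial, Finsupp.prod_fintype, toFinsupp]
  rw [hfun]
  exact hmono.map hdisj

end Monomials

/-- The exponent in `{0, …, q - 1}` that is `0` only for `n = 0` and otherwise congruent to `n`
modulo `q - 1`, so that `t ^ n = t ^ reduceExp q n` on a field with `q` elements. -/
def reduceExp (q n : ℕ) : ℕ := if n = 0 then 0 else (n - 1) % (q - 1) + 1

theorem reduceExp_eq_zero_iff {q n : ℕ} : reduceExp q n = 0 ↔ n = 0 := by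
  unfold reduceExp; split_ifs <;> simp_all

theorem reduceExp_lt {q : ℕ} (hq : 1 < q) (n : ℕ) : reduceExp q n < q := by
  unfold reduceExp; split_ifs
  · omega
  · have := Nat.mod_lt (n - 1) (show 0 < q - 1 by omega)
    omega

theorem reduceExp_of_le_sub_one {q n : ℕ} (h : n ≤ q - 1) : reduceExp q n = n := by
  unfold reduceExp; split_ifs
  · omega
  · rw [Nat.mod_eq_of_lt (by omega)]; omega

theorem pow_reduceExp {K : Type*} [Field K] [Fintype K] (t : K) (n : ℕ) :
    t ^ reduceExp (Fintype.card K) n = t ^ n := by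
  unfold reduceExp
  split_ifs with hn
  · rw [hn]
  rcases eq_or_ne t 0 with rfl | ht
  · rw [zero_pow hn, zero_pow (Nat.succ_ne_zero _)]
  set q := Fintype.card K
  calc t ^ ((n - 1) % (q - 1) + 1)
      = t ^ ((n - 1) % (q - 1) + 1) * (t ^ (q - 1)) ^ ((n - 1) / (q - 1)) := by
        rw [FiniteField.pow_card_sub_one_eq_one t ht, one_pow, mul_one]
    _ = t ^ n := by
        rw [← pow_mul, ← pow_add]
        congr 1
        have := Nat.mod_add_div (n - 1) (q - 1)
        omega

theorem eq_of_sum_eq_of_subsingleton_ne {ι M : Type*} [Fintype ι] [AddCancelCommMonoid M]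
    {f g : ι → M} (hsum : ∑ i, f i = ∑ i, g i) (hne : {i | f i ≠ g i}.Subsingleton) :
    f = g := by
  classical
  by_contra h
  obtain ⟨i, hi⟩ := Function.ne_iff.mp h
  have hrest : ∑ j ∈ univ.erase i, f j = ∑ j ∈ univ.erase i, g j :=
    sum_congr rfl fun j hj => not_not.mp fun hj' => ne_of_mem_erase hj (hne hj' hi)
  rw [← add_sum_erase _ _ (mem_univ i), ← add_sum_erase _ g (mem_univ i), hrest] at hsum
  exact hi (add_right_cancel hsum)

theorem eq_of_reduceExp_eq {ι : Type*} [Fintype ι] [LinearOrder ι] {q : ℕ} {s s' : ι → ℕ}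
    (hsum : ∑ i, s i = ∑ i, s' i)
    (hs : ∀ i j, i < j → s i ≠ 0 → s j ≤ q - 1)
    (hs' : ∀ i j, i < j → s' i ≠ 0 → s' j ≤ q - 1)
    (hred : ∀ i, reduceExp q (s i) = reduceExp q (s' i)) : s = s' := by
  have hzero : ∀ i, s i = 0 ↔ s' i = 0 := fun i => by
    rw [← reduceExp_eq_zero_iff (q := q), hred, reduceExp_eq_zero_iff]
  have hfirst : ∀ j, s j ≠ s' j → s j ≠ 0 ∧ ∀ i < j, s i = 0 := by
    intro j hj
    refine ⟨fun h0 => hj (h0.trans ((hzero j).mp h0).symm), fun i hij => ?_⟩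
    by_contra hi
    apply hj
    rw [← reduceExp_of_le_sub_one (hs i j hij hi), hred,
      reduceExp_of_le_sub_one (hs' i j hij (mt (hzero i).mpr hi))]
  refine eq_of_sum_eq_of_subsingleton_ne hsum fun j₁ h₁ j₂ h₂ => ?_
  by_contra hj
  rcases lt_or_gt_of_ne hj with hlt | hlt
  · exact (hfirst j₁ h₁).1 ((hfirst j₂ h₂).2 j₁ hlt)
  · exact (hfirst j₂ h₂).1 ((hfirst j₁ h₁).2 j₂ hlt)

theorem stmt7_general (p k l : ℕ) [Fact p.Prime] :
    LinearIndependent (ZMod p)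
      (fun s : {s : Fin k → ℕ // (∑ i, s i) = l ∧
          ∀ i j : Fin k, i < j → s i ≠ 0 → s j ≤ p - 1} =>
        (fun t : Fin k → ZMod p => ∏ i, (t i) ^ (s.1 i))) := by
  have hp : Fintype.card (ZMod p) = p := ZMod.card p
  let reduce : {s : Fin k → ℕ // (∑ i, s i) = l ∧
      ∀ i j : Fin k, i < j → s i ≠ 0 → s j ≤ p - 1} →
      {d : Fin k → ℕ // ∀ i, d i < Fintype.card (ZMod p)} :=
    fun s => ⟨fun i => reduceExp p (s.1 i), fun i => by
      rw [hp]; exact reduceExp_lt (Fact.out : p.Prime).one_lt _⟩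
  have hreduce : Function.Injective reduce := fun s s' h =>
    Subtype.ext <| eq_of_reduceExp_eq (s.2.1.trans s'.2.1.symm) s.2.2 s'.2.2
      fun i => congrFun (congrArg Subtype.val h) i
  convert (linearIndependent_monomial_functions (ZMod p) (Fin k)).comp reduce hreduce using 1
  funext s t
  simp only [Function.comp_apply, reduce]
  exact prod_congr rfl fun i _ => by rw [← pow_reduceExp (t i) (s.1 i), hp]

/-- The monomial functions `(t₁,…,t_k) ↦ ∏ tᵢ^{sᵢ}` on `(𝔽_p)^k`, where `s` runs over
tuples of nonnegative integers summing to `l` in which every coordinate except possibly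
the first nonzero one is at most `p − 1`, are linearly independent over `𝔽_p`. -/
theorem stmt7 (p k l : ℕ) [Fact p.Prime] (hk : 1 ≤ k) (hl : 1 ≤ l) :
    LinearIndependent (ZMod p)
      (fun s : {s : Fin k → ℕ // (∑ i, s i) = l ∧
          ∀ i j : Fin k, i < j → s i ≠ 0 → s j ≤ p - 1} =>
        (fun t : Fin k → ZMod p => ∏ i, (t i) ^ (s.1 i))) :=
  stmt7_general p k l
end
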